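/- arXiv:2503.00716 — 3 statements merged into one kernel-verified Lean document; each statement's English description precedes it below -/
import Mathlib

section
/- Suppose T and C are conditionally independent given X, C is independent of X with survival function G(t) = P(C ≥ t) which is positive at the relevant points, Y = min(T,C), Δ = 1{T ≤ C}, and the quantile residual lifetime condition P(t0 ≤ T ≤ t0 + exp(Xᵀα0) | X) = τ · P(T ≥ t0 | X) holds. Assume there are no issues with atoms of G (e.g., C continuous). Then the inverse-probability-of-censoring weighted indicator satisfies E[ (Δ/G(Y)) 1{t0 ≤ Y ≤ t0+exp(Xᵀα0)} | X ] = τ · P(T ≥ t0 | X). -/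
open MeasureTheory ProbabilityTheory Matrix

/-- Inverse-probability-of-censoring weighting.  With `Y = min(T,C)`,
`Δ = 1{T ≤ C}`, `C` independent of `T` (covariates fixed at `x`), continuous censoring
survival function `G(t) = P(C ≥ t) > 0` on the relevant range, and the quantile residual
lifetime identity `P(t0 ≤ T ≤ t0 + exp(xᵀα0)) = τ P(T ≥ t0)`, we have
`E[Δ G(Y)⁻¹ 1{t0 ≤ Y ≤ t0 + exp(xᵀα0)}] = τ · P(T ≥ t0)`. -/
theorem stmt1 {Ω : Type*} [MeasurableSpace Ω] (P : Measure Ω) [IsProbabilityMeasure P]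
    {p : ℕ} (x α0 : Fin p → ℝ) (t0 τ : ℝ) (hτ : τ ∈ Set.Ioo (0 : ℝ) 1)
    (T C : Ω → ℝ) (hT : Measurable T) (hC : Measurable C)
    (hindep : ProbabilityTheory.IndepFun T C P)
    (G : ℝ → ℝ) (hG : ∀ t, G t = (P {ω | t ≤ C ω}).toReal)
    (hGpos : ∀ t, t ≤ t0 + Real.exp (x ⬝ᵥ α0) → 0 < G t)
    (hCcont : ∀ t : ℝ, P {ω | C ω = t} = 0)
    (hQRL : P {ω | t0 ≤ T ω ∧ T ω ≤ t0 + Real.exp (x ⬝ᵥ α0)} =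
      ENNReal.ofReal τ * P {ω | t0 ≤ T ω}) :
    (∫ ω, (if T ω ≤ C ω ∧ t0 ≤ min (T ω) (C ω) ∧
            min (T ω) (C ω) ≤ t0 + Real.exp (x ⬝ᵥ α0)
          then (G (min (T ω) (C ω)))⁻¹ else 0) ∂P) =
      τ * (P {ω | t0 ≤ T ω}).toReal := by
  set b := t0 + Real.exp (x ⬝ᵥ α0) with hb
  have hGanti : Antitone G := by
    intro s t hst
    rw [hG, hG]
    exact ENNReal.toReal_mono (measure_ne_top P _) (measure_mono fun ω h => le_trans hst h)
  have hGmeas : Measurable G := hGanti.measurable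
  set F : ℝ × ℝ → ℝ := fun q =>
    if q.1 ≤ q.2 ∧ t0 ≤ min q.1 q.2 ∧ min q.1 q.2 ≤ b then (G (min q.1 q.2))⁻¹ else 0
    with hF
  have hminmeas : Measurable fun q : ℝ × ℝ => min q.1 q.2 :=
    measurable_fst.min measurable_snd
  have hFmeas : Measurable F := by
    apply Measurable.ite
    · exact (measurableSet_le measurable_fst measurable_snd).inter
        ((measurableSet_le measurable_const hminmeas).inter
          (measurableSet_le hminmeas measurable_const))
    · exact (hGmeas.comp hminmeas).inv
    · exact measurable_const
  have hGb : 0 < G b := hGpos b le_rfl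
  have hFbound : ∀ q, ‖F q‖ ≤ (G b)⁻¹ := by
    intro q
    rw [hF]
    dsimp only
    split_ifs with h
    · rw [Real.norm_eq_abs, abs_of_nonneg (inv_nonneg.mpr (hGpos _ h.2.2).le)]
      exact inv_anti₀ hGb (hGanti h.2.2)
    · simp [inv_nonneg.mpr hGb.le]
  have hPT : IsProbabilityMeasure (P.map T) := Measure.isProbabilityMeasure_map hT.aemeasurable
  have hPC : IsProbabilityMeasure (P.map C) := Measure.isProbabilityMeasure_map hC.aemeasurable
  have hint : Integrable F ((P.map T).prod (P.map C)) :=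
    (integrable_const ((G b)⁻¹)).mono' hFmeas.aestronglyMeasurable
      (Filter.Eventually.of_forall hFbound)
  have hmap : P.map (fun ω => (T ω, C ω)) = (P.map T).prod (P.map C) :=
    (ProbabilityTheory.indepFun_iff_map_prod_eq_prod_map_map hT.aemeasurable
      hC.aemeasurable).mp hindep
  have hinner : ∀ t, (∫ c, F (t, c) ∂(P.map C)) =
      Set.indicator (Set.Icc t0 b) (fun _ => (1:ℝ)) t := by
    intro t
    by_cases ht : t0 ≤ t ∧ t ≤ b
    · have heq : (fun c => F (t, c)) = Set.indicator (Set.Ici t) (fun _ => (G t)⁻¹) := by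
        funext c
        rw [hF]
        dsimp only
        by_cases htc : t ≤ c
        · rw [min_eq_left htc, if_pos ⟨htc, ht.1, ht.2⟩]
          exact (Set.indicator_of_mem htc fun _ => (G t)⁻¹).symm
        · rw [if_neg (fun h => htc h.1)]
          exact (Set.indicator_of_notMem htc fun _ => (G t)⁻¹).symm
      rw [heq, integral_indicator_const _ measurableSet_Ici, measureReal_def,
        Measure.map_apply hC measurableSet_Ici]
      have hpre : C ⁻¹' Set.Ici t = {ω | t ≤ C ω} := rfl
      rw [hpre, smul_eq_mul, Set.indicator_of_mem (Set.mem_Icc.mpr ht), ← hG t,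
        mul_inv_cancel₀ (hGpos t ht.2).ne']
    · have heq : (fun c => F (t, c)) = fun _ => (0:ℝ) := by
        funext c
        rw [hF]
        dsimp only
        rw [if_neg]
        rintro ⟨htc, h1, h2⟩
        rw [min_eq_left htc] at h1 h2
        exact ht ⟨h1, h2⟩
      rw [heq, integral_zero, Set.indicator_of_notMem (by simpa [Set.mem_Icc] using ht)]
  calc (∫ ω, (if T ω ≤ C ω ∧ t0 ≤ min (T ω) (C ω) ∧ min (T ω) (C ω) ≤ b
          then (G (min (T ω) (C ω)))⁻¹ else 0) ∂P)
      = ∫ ω, F (T ω, C ω) ∂P := rfl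
    _ = ∫ q, F q ∂(P.map (fun ω => (T ω, C ω))) :=
        (integral_map (hT.prodMk hC).aemeasurable hFmeas.aestronglyMeasurable).symm
    _ = ∫ q, F q ∂((P.map T).prod (P.map C)) := by rw [hmap]
    _ = ∫ t, ∫ c, F (t, c) ∂(P.map C) ∂(P.map T) := integral_prod F hint
    _ = ∫ t, Set.indicator (Set.Icc t0 b) (fun _ => (1:ℝ)) t ∂(P.map T) := by
        simp only [hinner]
    _ = (P.map T (Set.Icc t0 b)).toReal := by
        rw [integral_indicator_const _ measurableSet_Icc, smul_eq_mul, mul_one, measureReal_def]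
    _ = τ * (P {ω | t0 ≤ T ω}).toReal := by
        rw [Measure.map_apply hT measurableSet_Icc]
        have hpre : T ⁻¹' Set.Icc t0 b = {ω | t0 ≤ T ω ∧ T ω ≤ b} := rfl
        rw [hpre, hQRL, ENNReal.toReal_mul, ENNReal.toReal_ofReal hτ.1.le]
end

section
/- Under the setup of the inverse-probability-of-censoring weighting, the estimating-function summand has conditional mean zero: E[ 1{Y ≥ t0} ( Δ·1{Y ≤ t0 + exp(Xᵀα0)}·G(t0)/G(Y) − τ ) | X ] = 0. -/
open MeasureTheory ProbabilityTheory Matrix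

/-!
On `{Δ = 1}` one has `Y = T`, so the summand splits as `Δ·w(T) − τ·1{T ≥ t0}·1{C ≥ t0}` with
`w(t) = 1{t0 ≤ t ≤ t0 + exp(xᵀα0)}·G(t0)/G(t)`. Integrating out `C` first, independence turns
`E[Δ·w(T)]` into `E[w(T)·G(T)] = G(t0)·P(t0 ≤ T ≤ t0 + exp(xᵀα0))`, and the second term into
`τ·P(T ≥ t0)·G(t0)`; the quantile residual lifetime identity says these agree.
-/

namespace ProbabilityTheory

variable {Ω : Type*} [MeasurableSpace Ω] {P : Measure Ω}

theorem antitone_measureReal_setOf_le [IsFiniteMeasure P] (C : Ω → ℝ) :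
    Antitone fun t ↦ P.real {ω | t ≤ C ω} :=
  fun _ _ hst ↦ measureReal_mono fun _ h ↦ hst.trans h

theorem IndepFun.measureReal_inter_preimage_eq_mul {T C : Ω → ℝ} (hindep : IndepFun T C P)
    {A B : Set ℝ} (hA : MeasurableSet A) (hB : MeasurableSet B) :
    P.real (T ⁻¹' A ∩ C ⁻¹' B) = P.real (T ⁻¹' A) * P.real (C ⁻¹' B) := by
  rw [measureReal_def, hindep.measure_inter_preimage_eq_mul A B hA hB, ENNReal.toReal_mul]
  rfl

theorem measurable_indicator_Icc_div_survival [IsFiniteMeasure P] (C : Ω → ℝ) (a b c : ℝ) :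
    Measurable ((Set.Icc a b).indicator fun t ↦ c / P.real {ω | t ≤ C ω}) :=
  ((antitone_measureReal_setOf_le C).measurable.const_div c).indicator measurableSet_Icc

variable [IsProbabilityMeasure P] {T C : Ω → ℝ}

theorem IndepFun.integral_indicator_le_eq_integral_mul_survival (hT : Measurable T)
    (hC : Measurable C) (hindep : IndepFun T C P) {f : ℝ → ℝ} (hf : Measurable f)
    (hfi : Integrable (fun ω ↦ f (T ω)) P) :
    ∫ ω, {ω | T ω ≤ C ω}.indicator (fun ω ↦ f (T ω)) ω ∂P =
      ∫ ω, f (T ω) * P.real {ω' | T ω ≤ C ω'} ∂P := by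
  set μ := P.map T
  set ν := P.map C
  have hprod : P.map (fun ω ↦ (T ω, C ω)) = μ.prod ν :=
    (indepFun_iff_map_prod_eq_prod_map_map hT.aemeasurable hC.aemeasurable).mp hindep
  set g : ℝ × ℝ → ℝ := {q | q.1 ≤ q.2}.indicator (fun q ↦ f q.1)
  have hg : Integrable g (μ.prod ν) :=
    (((integrable_map_measure hf.aestronglyMeasurable hT.aemeasurable).mpr hfi).comp_fst
      ν).indicator (measurableSet_le measurable_fst measurable_snd)
  have hinner : ∀ t, ∫ c, g (t, c) ∂ν = f t * P.real {ω | t ≤ C ω} := fun t ↦ by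
    rw [show P.real {ω | t ≤ C ω} = ν.real (Set.Ici t) from
      (map_measureReal_apply hC measurableSet_Ici).symm, mul_comm, ← smul_eq_mul,
      ← integral_indicator_const _ measurableSet_Ici]
    rfl
  calc ∫ ω, {ω | T ω ≤ C ω}.indicator (fun ω ↦ f (T ω)) ω ∂P
      = ∫ q, g q ∂(μ.prod ν) := by
        rw [← hprod, integral_map (hT.prodMk hC).aemeasurable (hprod ▸ hg.aestronglyMeasurable)]
        rfl
    _ = ∫ t, f t * P.real {ω | t ≤ C ω} ∂μ := by
        simp_rw [integral_prod g hg, hinner]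
    _ = ∫ ω, f (T ω) * P.real {ω' | T ω ≤ C ω'} ∂P :=
        integral_map hT.aemeasurable
          (hf.mul (antitone_measureReal_setOf_le C).measurable).aestronglyMeasurable

theorem integrable_indicator_Icc_div_survival (hT : Measurable T) {a b : ℝ}
    (hb : 0 < P.real {ω | b ≤ C ω}) (c : ℝ) :
    Integrable (fun ω ↦ (Set.Icc a b).indicator (fun t ↦ c / P.real {ω | t ≤ C ω}) (T ω)) P := by
  have hS := antitone_measureReal_setOf_le (P := P) C
  refine .of_bound ((measurable_indicator_Icc_div_survival C a b c).comp
    hT).aestronglyMeasurable (|c| / P.real {ω | b ≤ C ω}) (ae_of_all _ fun ω ↦ ?_)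
  by_cases ht : T ω ∈ Set.Icc a b
  · rw [Set.indicator_of_mem ht, norm_div, Real.norm_eq_abs,
      Real.norm_of_nonneg measureReal_nonneg]
    exact div_le_div_of_nonneg_left (abs_nonneg c) hb (hS ht.2)
  · rw [Set.indicator_of_notMem ht, norm_zero]
    positivity

theorem IndepFun.integral_indicator_le_indicator_Icc_div_survival (hT : Measurable T)
    (hC : Measurable C) (hindep : IndepFun T C P) {a b : ℝ} (hb : 0 < P.real {ω | b ≤ C ω})
    (c : ℝ) :
    ∫ ω, {ω | T ω ≤ C ω}.indicator
        (fun ω ↦ (Set.Icc a b).indicator (fun t ↦ c / P.real {ω | t ≤ C ω}) (T ω)) ω ∂P =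
      c * P.real {ω | a ≤ T ω ∧ T ω ≤ b} := by
  rw [hindep.integral_indicator_le_eq_integral_mul_survival hT hC
    (measurable_indicator_Icc_div_survival C a b c)
    (integrable_indicator_Icc_div_survival hT hb c)]
  have hweight : ∀ ω, (Set.Icc a b).indicator (fun t ↦ c / P.real {ω | t ≤ C ω}) (T ω) *
      P.real {ω' | T ω ≤ C ω'} = (T ⁻¹' Set.Icc a b).indicator (fun _ ↦ c) ω := fun ω ↦ by
    by_cases ht : T ω ∈ Set.Icc a b
    · rw [Set.indicator_of_mem ht, Set.indicator_of_mem (show ω ∈ T ⁻¹' Set.Icc a b from ht),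
        div_mul_cancel₀]
      exact (hb.trans_le (antitone_measureReal_setOf_le C ht.2)).ne'
    · rw [Set.indicator_of_notMem ht,
        Set.indicator_of_notMem (show ω ∉ T ⁻¹' Set.Icc a b from ht), zero_mul]
  simp_rw [hweight]
  rw [integral_indicator_const _ (hT measurableSet_Icc), smul_eq_mul, mul_comm]
  rfl

end ProbabilityTheory

theorem ite_le_min_sub_eq_indicator_sub_indicator {Ω : Type*} (T C : Ω → ℝ) (t0 u τ : ℝ)
    (g : ℝ → ℝ) (ω : Ω) :
    (if t0 ≤ min (T ω) (C ω) then
        (if T ω ≤ C ω ∧ min (T ω) (C ω) ≤ u then g (min (T ω) (C ω)) else 0) - τ else 0) =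
      {ω | T ω ≤ C ω}.indicator (fun ω ↦ (Set.Icc t0 u).indicator g (T ω)) ω -
        {ω | t0 ≤ T ω ∧ t0 ≤ C ω}.indicator (fun _ ↦ τ) ω := by
  simp only [Set.indicator_apply, Set.mem_ofPred_eq, Set.mem_Icc]
  rcases le_or_gt (T ω) (C ω) with htc | hct
  · rw [min_eq_left htc]
    split_ifs <;> simp_all <;> linarith
  · rw [min_eq_right hct.le]
    split_ifs <;> simp_all <;> linarith

theorem stmt2_general {Ω : Type*} [MeasurableSpace Ω] (P : Measure Ω) [IsProbabilityMeasure P]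
    {p : ℕ} (x α0 : Fin p → ℝ) (t0 τ : ℝ) (hτ : τ ∈ Set.Ioo (0 : ℝ) 1)
    (T C : Ω → ℝ) (hT : Measurable T) (hC : Measurable C)
    (hindep : ProbabilityTheory.IndepFun T C P)
    (G : ℝ → ℝ) (hG : ∀ t, G t = (P {ω | t ≤ C ω}).toReal)
    (hGpos : ∀ t, t ≤ t0 + Real.exp (x ⬝ᵥ α0) → 0 < G t)
    (hQRL : P {ω | t0 ≤ T ω ∧ T ω ≤ t0 + Real.exp (x ⬝ᵥ α0)} =
      ENNReal.ofReal τ * P {ω | t0 ≤ T ω}) :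
    (∫ ω, (if t0 ≤ min (T ω) (C ω) then
            (if T ω ≤ C ω ∧ min (T ω) (C ω) ≤ t0 + Real.exp (x ⬝ᵥ α0)
              then G t0 / G (min (T ω) (C ω)) else 0) - τ
          else 0) ∂P) = 0 := by
  set u := t0 + Real.exp (x ⬝ᵥ α0)
  obtain rfl : G = fun t ↦ P.real {ω | t ≤ C ω} := funext hG
  have hGu : 0 < P.real {ω | u ≤ C ω} := hGpos u le_rfl
  have hrisk : MeasurableSet {ω | t0 ≤ T ω ∧ t0 ≤ C ω} :=
    (measurableSet_le measurable_const hT).inter (measurableSet_le measurable_const hC)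
  beta_reduce
  simp_rw [ite_le_min_sub_eq_indicator_sub_indicator T C t0 u τ
    (P.real {ω | t0 ≤ C ω} / P.real {ω | · ≤ C ω})]
  calc _ = P.real {ω | t0 ≤ C ω} * P.real {ω | t0 ≤ T ω ∧ T ω ≤ u} -
          τ * P.real {ω | t0 ≤ T ω ∧ t0 ≤ C ω} := by
        rw [integral_sub ((integrable_indicator_Icc_div_survival hT hGu _).indicator
          (measurableSet_le hT hC)) ((integrable_const τ).indicator hrisk),
          hindep.integral_indicator_le_indicator_Icc_div_survival hT hC hGu,
          integral_indicator_const _ hrisk, smul_eq_mul, mul_comm τ]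
    _ = P.real {ω | t0 ≤ C ω} * P.real {ω | t0 ≤ T ω ∧ T ω ≤ u} -
          τ * (P.real {ω | t0 ≤ T ω} * P.real {ω | t0 ≤ C ω}) := by
        congr 2
        exact hindep.measureReal_inter_preimage_eq_mul measurableSet_Ici measurableSet_Ici
    _ = 0 := by
        simp only [measureReal_def]
        rw [hQRL, ENNReal.toReal_mul, ENNReal.toReal_ofReal hτ.1.le]
        ring

/-- The IPCW estimating-function summand has (conditional) mean zero:
`E[ 1{Y ≥ t0} ( Δ·1{Y ≤ t0 + exp(xᵀα0)}·G(t0)/G(Y) − τ ) ] = 0`, where `Y = min(T,C)`,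
`Δ = 1{T ≤ C}`, `C` independent of `T` (covariates fixed at `x`) with continuous positive
survival function `G`, and `T` satisfies the quantile residual lifetime identity. -/
theorem stmt2 {Ω : Type*} [MeasurableSpace Ω] (P : Measure Ω) [IsProbabilityMeasure P]
    {p : ℕ} (x α0 : Fin p → ℝ) (t0 τ : ℝ) (hτ : τ ∈ Set.Ioo (0 : ℝ) 1)
    (T C : Ω → ℝ) (hT : Measurable T) (hC : Measurable C)
    (hindep : ProbabilityTheory.IndepFun T C P)
    (G : ℝ → ℝ) (hG : ∀ t, G t = (P {ω | t ≤ C ω}).toReal)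
    (hGpos : ∀ t, t ≤ t0 + Real.exp (x ⬝ᵥ α0) → 0 < G t)
    (hCcont : ∀ t : ℝ, P {ω | C ω = t} = 0)
    (hQRL : P {ω | t0 ≤ T ω ∧ T ω ≤ t0 + Real.exp (x ⬝ᵥ α0)} =
      ENNReal.ofReal τ * P {ω | t0 ≤ T ω}) :
    (∫ ω, (if t0 ≤ min (T ω) (C ω) then
            (if T ω ≤ C ω ∧ min (T ω) (C ω) ≤ t0 + Real.exp (x ⬝ᵥ α0)
              then G t0 / G (min (T ω) (C ω)) else 0) - τ
          else 0) ∂P) = 0 :=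
  stmt2_general P x α0 t0 τ hτ T C hT hC hindep G hG hGpos hQRL
end

section
/- In the heteroscedastic model log T = β0 + β1 x + (1 − a x)ε with exp(ε) ~ Exp(λ), x ∈ {0,1}, 0 < a < 1, t0 > 0, the τ-th conditional quantile q(x) of T − t0 given T ≥ t0 satisfies: q(0) = −λ⁻¹ log(1−τ) exp(β0) (memorylessness for x = 0), while q(1) = t0[1 − λ⁻¹ t0^{−1/(1−a)} log(1−τ) exp((β0+β1)/(1−a))]^{1−a} − t0, so that the log-quantile difference log q(1) − log q(0) equals the stated α1(τ, t0) formula of the paper. -/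
/-!
With `E = exp ε ~ Exp(λ)`, the model reads `T = exp b * E ^ p` with `b = β0 + β1 x` and
`p = 1 - a x > 0`. Since `y ↦ exp b * y ^ p` is increasing, `T ≥ t0` iff `E ≥ c` with
`t0 = exp b * c ^ p`, and by memorylessness the conditional `τ`-quantile of `E` given `E ≥ c`
is `c - λ⁻¹ log (1 - τ)`. Mapping it back gives `q(x)`; for `x = 0` the dependence on `t0`
cancels. The log-difference is then `log (q1 / q0)`.
-/

open MeasureTheory ProbabilityTheory Real Filter Topology Set

section Tail

variable {Ω : Type*} [MeasurableSpace Ω] {μ : Measure Ω} {X : Ω → ℝ}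

theorem tendsto_measure_setOf_sub_lt [IsFiniteMeasure μ] (hX : Measurable X) (s : ℝ) :
    Tendsto (fun u => μ {ω | s - u < X ω}) (𝓝[>] 0) (𝓝 (μ {ω | s ≤ X ω})) := by
  have hInter : ⋂ u > (0 : ℝ), {ω | s - u < X ω} = {ω | s ≤ X ω} := by
    ext ω
    simp only [mem_iInter, mem_ofPred_eq]
    refine ⟨fun h => le_of_forall_pos_lt_add fun u hu => ?_, fun h u hu => by linarith⟩
    linarith [h u hu]
  rw [← hInter]
  refine tendsto_measure_biInter_gt (fun u _ => ?_) (fun u v _ huv ω hω => ?_)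
    ⟨1, one_pos, measure_ne_top μ _⟩
  · exact (measurableSet_lt measurable_const hX).nullMeasurableSet
  · simp only [mem_ofPred_eq] at hω ⊢
    linarith

def HasExpTail (μ : Measure Ω) (X : Ω → ℝ) (lam : ℝ) : Prop :=
  ∀ s : ℝ, 0 ≤ s → μ {ω | s < X ω} = ENNReal.ofReal (exp (-lam * s))

variable {lam : ℝ}

theorem HasExpTail.measure_le [IsFiniteMeasure μ] (h : HasExpTail μ X lam) (hX : Measurable X)
    {s : ℝ} (hs : 0 < s) : μ {ω | s ≤ X ω} = ENNReal.ofReal (exp (-lam * s)) := by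
  refine tendsto_nhds_unique (tendsto_measure_setOf_sub_lt hX s) ?_
  have hnonneg : ∀ᶠ u in 𝓝[>] (0 : ℝ), u ≤ s :=
    eventually_nhdsWithin_of_eventually_nhds (eventually_le_nhds hs)
  refine Tendsto.congr' (hnonneg.mono fun u hu => (h (s - u) (by linarith)).symm) ?_
  refine ENNReal.tendsto_ofReal (Continuous.tendsto' ?_ _ _ (by simp)) |>.mono_left
    nhdsWithin_le_nhds
  fun_prop

/-- Memorylessness of the exponential law. -/
theorem HasExpTail.cond_le_add [IsFiniteMeasure μ] (h : HasExpTail μ X lam) (hX : Measurable X)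
    {c d : ℝ} (hc : 0 < c) (hd : 0 ≤ d) :
    μ[{ω | X ω ≤ c + d} | {ω | c ≤ X ω}] = ENNReal.ofReal (1 - exp (-lam * d)) := by
  have hsub : {ω | c + d < X ω} ⊆ {ω | c ≤ X ω} := fun ω hω => by
    simp only [mem_ofPred_eq] at hω ⊢
    linarith
  have hinter : {ω | c ≤ X ω} ∩ {ω | X ω ≤ c + d} = {ω | c ≤ X ω} \ {ω | c + d < X ω} := by
    ext ω
    simp
  have hexp_add : exp (-lam * (c + d)) = exp (-lam * c) * exp (-lam * d) := by
    rw [← exp_add]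
    ring_nf
  rw [cond_apply (measurableSet_le measurable_const hX), hinter,
    measure_sdiff hsub (measurableSet_lt measurable_const hX).nullMeasurableSet
      (measure_ne_top μ _), h.measure_le hX hc, h _ (by linarith),
    ← ENNReal.ofReal_sub _ (exp_nonneg _), hexp_add, ← mul_one_sub,
    ENNReal.ofReal_mul (exp_nonneg _), ENNReal.inv_mul_cancel_left]
  · exact (ENNReal.ofReal_pos.mpr (exp_pos _)).ne'
  · exact ENNReal.ofReal_ne_top

end Tail

noncomputable def expQuantile (lam τ : ℝ) : ℝ := -lam⁻¹ * log (1 - τ)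

theorem expQuantile_pos {lam τ : ℝ} (hlam : 0 < lam) (hτ : τ ∈ Ioo (0 : ℝ) 1) :
    0 < expQuantile lam τ := by
  have hlog : log (1 - τ) < 0 := log_neg (by linarith [hτ.2]) (by linarith [hτ.1])
  exact mul_pos_of_neg_of_neg (neg_neg_of_pos (inv_pos.mpr hlam)) hlog

theorem one_sub_exp_neg_mul_expQuantile {lam τ : ℝ} (hlam : 0 < lam) (hτ : τ < 1) :
    1 - exp (-lam * expQuantile lam τ) = τ := by
  rw [expQuantile, show -lam * (-lam⁻¹ * log (1 - τ)) = log (1 - τ) by field_simp,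
    exp_log (by linarith)]
  ring

theorem exp_add_mul_eq (b p y : ℝ) : exp (b + p * y) = exp b * exp y ^ p := by
  rw [exp_add, mul_comm p, exp_mul]

theorem exp_mul_rpow_le_exp_mul_rpow_iff {b p y z : ℝ} (hp : 0 < p) (hy : 0 ≤ y) (hz : 0 ≤ z) :
    exp b * y ^ p ≤ exp b * z ^ p ↔ y ≤ z := by
  rw [mul_le_mul_iff_right₀ (exp_pos b), rpow_le_rpow_iff hy hz hp]

section Quantile

variable {Ω : Type*} [MeasurableSpace Ω] {μ : Measure Ω} [IsFiniteMeasure μ] {ε : Ω → ℝ}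
  {lam τ : ℝ}

/-- The event `t ≤ exp (b + p ε)` is `c ≤ exp ε` with `t = exp b * c ^ p`; the quantile is the
image of `c + expQuantile lam τ` under `y ↦ exp b * y ^ p`. -/
theorem HasExpTail.cond_exp_add_mul_sub_le (h : HasExpTail μ (fun ω => exp (ε ω)) lam)
    (hε : Measurable ε) (hlam : 0 < lam) (hτ : τ ∈ Ioo (0 : ℝ) 1) {b p t : ℝ} (hp : 0 < p)
    (ht : 0 < t) :
    μ[{ω | exp (b + p * ε ω) - t ≤ exp b * ((t * exp (-b)) ^ p⁻¹ + expQuantile lam τ) ^ p - t} |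
      {ω | t ≤ exp (b + p * ε ω)}] = ENNReal.ofReal τ := by
  set c := (t * exp (-b)) ^ p⁻¹
  have hc : 0 < c := by positivity
  have htc : t = exp b * c ^ p := by
    rw [rpow_inv_rpow (by positivity) hp.ne', mul_left_comm, ← exp_add, add_neg_cancel, exp_zero,
      mul_one]
  have hL := expQuantile_pos hlam hτ
  have hlower : {ω | t ≤ exp (b + p * ε ω)} = {ω | c ≤ exp (ε ω)} := by
    ext ω
    rw [mem_ofPred_eq, mem_ofPred_eq, exp_add_mul_eq, htc,
      exp_mul_rpow_le_exp_mul_rpow_iff hp hc.le (exp_nonneg _)]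
  have hupper : {ω | exp (b + p * ε ω) - t ≤ exp b * (c + expQuantile lam τ) ^ p - t} =
      {ω | exp (ε ω) ≤ c + expQuantile lam τ} := by
    ext ω
    rw [mem_ofPred_eq, mem_ofPred_eq, sub_le_sub_iff_right, exp_add_mul_eq,
      exp_mul_rpow_le_exp_mul_rpow_iff hp (exp_nonneg _) (by positivity)]
  rw [hlower, hupper, h.cond_le_add (by fun_prop) hc hL.le,
    one_sub_exp_neg_mul_expQuantile hlam hτ.2]

end Quantile

theorem exp_mul_rpow_add_eq {b p t L : ℝ} (hp : 0 < p) (ht : 0 < t) (hL : 0 ≤ L) :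
    exp b * ((t * exp (-b)) ^ p⁻¹ + L) ^ p = t * (1 + L * t ^ (-(1 / p)) * exp (b / p)) ^ p := by
  have hfactor : (t * exp (-b)) ^ p⁻¹ + L =
      (t * exp (-b)) ^ p⁻¹ * (1 + L * t ^ (-(1 / p)) * exp (b / p)) := by
    rw [mul_rpow ht.le (exp_nonneg _), ← exp_mul, rpow_neg ht.le, one_div]
    field_simp
    rw [exp_neg]
    field_simp
  rw [hfactor, mul_rpow (by positivity) (by positivity), rpow_inv_rpow (by positivity) hp.ne',
    ← mul_assoc, mul_left_comm, ← exp_add, add_neg_cancel, exp_zero, mul_one]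

/-- In the heteroscedastic model `log T = β0 + β1 x + (1 − a x)ε` with
`exp(ε) ~ Exp(λ)`, `x ∈ {0,1}`, `0 < a < 1`, `t0 > 0`: the τ-th conditional quantile of
`T − t0` given `T ≥ t0` is `q(0) = −λ⁻¹ log(1−τ) exp(β0)` for `x = 0` (memorylessness)
and `q(1) = t0[1 − λ⁻¹ t0^{−1/(1−a)} log(1−τ) exp((β0+β1)/(1−a))]^{1−a} − t0` for `x = 1`,
and the log-quantile difference equals the paper's `α1(τ,t0)`. -/
theorem stmt16 {Ω : Type*} [MeasurableSpace Ω] (P : Measure Ω) [IsProbabilityMeasure P]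
    (ε : Ω → ℝ) (hε : Measurable ε) (lam : ℝ) (hlam : 0 < lam)
    (hexp : ∀ s : ℝ, 0 ≤ s → P {ω | s < Real.exp (ε ω)} = ENNReal.ofReal (Real.exp (-lam * s)))
    (β0 β1 a t0 τ : ℝ) (ha : 0 < a ∧ a < 1) (ht0 : 0 < t0) (hτ : τ ∈ Set.Ioo (0 : ℝ) 1)
    (T : ℝ → Ω → ℝ)
    (hTdef : ∀ x ω, T x ω = Real.exp (β0 + β1 * x + (1 - a * x) * ε ω))
    (q0 q1 : ℝ)
    (hq0 : q0 = -lam⁻¹ * Real.log (1 - τ) * Real.exp β0)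
    (hq1 : q1 = t0 * (1 - lam⁻¹ * t0 ^ (-(1 / (1 - a))) * Real.log (1 - τ) *
        Real.exp ((β0 + β1) / (1 - a))) ^ (1 - a) - t0) :
    ProbabilityTheory.cond P {ω | t0 ≤ T 0 ω} {ω | T 0 ω - t0 ≤ q0} = ENNReal.ofReal τ ∧
    ProbabilityTheory.cond P {ω | t0 ≤ T 1 ω} {ω | T 1 ω - t0 ≤ q1} = ENNReal.ofReal τ ∧
    Real.log q1 - Real.log q0 =
      Real.log ((t0 * (1 - lam⁻¹ * t0 ^ (-(1 / (1 - a))) * Real.log (1 - τ) *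
          Real.exp ((β0 + β1) / (1 - a))) ^ (1 - a) - t0) /
        (-lam⁻¹ * Real.log (1 - τ) * Real.exp β0)) := by
  have htail : HasExpTail P (fun ω => exp (ε ω)) lam := hexp
  have hp : 0 < 1 - a := by linarith [ha.2]
  have hL := expQuantile_pos hlam hτ
  have hT0 : ∀ ω, T 0 ω = exp (β0 + 1 * ε ω) := fun ω => by rw [hTdef]; ring_nf
  have hT1 : ∀ ω, T 1 ω = exp ((β0 + β1) + (1 - a) * ε ω) := fun ω => by rw [hTdef]; ring_nf
  have hq0' : q0 = exp β0 * ((t0 * exp (-β0)) ^ (1 : ℝ)⁻¹ + expQuantile lam τ) ^ (1 : ℝ) - t0 := by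
    rw [hq0, inv_one, rpow_one, rpow_one, expQuantile, mul_add, mul_left_comm, ← exp_add,
      add_neg_cancel, exp_zero, mul_one]
    ring
  have hq1' : q1 = t0 * (1 + expQuantile lam τ * t0 ^ (-(1 / (1 - a))) *
      exp ((β0 + β1) / (1 - a))) ^ (1 - a) - t0 := by
    rw [hq1, expQuantile]
    ring_nf
  have hq0_pos : 0 < q0 := hq0.symm ▸ mul_pos hL (exp_pos β0)
  have hq1_pos : 0 < q1 := by
    have hK : 1 < 1 + expQuantile lam τ * t0 ^ (-(1 / (1 - a))) * exp ((β0 + β1) / (1 - a)) :=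
      lt_add_of_pos_right 1 (by positivity)
    rw [hq1', sub_pos]
    exact lt_mul_of_one_lt_right ht0 (one_lt_rpow hK hp)
  refine ⟨?_, ?_, ?_⟩
  · simp only [hT0, hq0']
    exact htail.cond_exp_add_mul_sub_le hε hlam hτ one_pos ht0
  · simp only [hT1, hq1', ← exp_mul_rpow_add_eq hp ht0 hL.le]
    exact htail.cond_exp_add_mul_sub_le hε hlam hτ hp ht0
  · rw [← hq1, ← hq0, log_div hq1_pos.ne' hq0_pos.ne']
end
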